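/- For λ>0 and b∈ℂ let e^{W_{λ,b}(x)} = λ/(λ/32 + |x²−b|²)², and define Z¹_{λ,b}(x) = √(λ/32)·Re(x²−b)/(λ/32 + |x²−b|²) and Z²_{λ,b}(x) = √(λ/32)·Im(x²−b)/(λ/32 + |x²−b|²). Then, for every λ>0 and b∈ℂ: ∫_{ℝ²}(Z¹_{λ,b})² |x|² e^{W_{λ,b}} dx = ∫_{ℝ²}(Z²_{λ,b})² |x|² e^{W_{λ,b}} dx = 4π/3, and ∫_{ℝ²} Z¹_{λ,b} Z²_{λ,b} |x|² e^{W_{λ,b}} dx = 0. -/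

import Mathlib

open MeasureTheory Filter Real Set

noncomputable section

/-- The bubble `e^{W_{λ,b}(x)} = λ/(λ/32 + |x²-b|²)²`. -/
def eW (lam : ℝ) (b : ℂ) (x : ℂ) : ℝ := lam / (lam / 32 + ‖x ^ 2 - b‖ ^ 2) ^ 2

/-- `Z¹_{λ,b}(x) = √(λ/32) Re(x²-b)/(λ/32 + |x²-b|²)`. -/
def Z1 (lam : ℝ) (b : ℂ) (x : ℂ) : ℝ :=
  Real.sqrt (lam / 32) * (x ^ 2 - b).re / (lam / 32 + ‖x ^ 2 - b‖ ^ 2)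

/-- `Z²_{λ,b}(x) = √(λ/32) Im(x²-b)/(λ/32 + |x²-b|²)`. -/
def Z2 (lam : ℝ) (b : ℂ) (x : ℂ) : ℝ :=
  Real.sqrt (lam / 32) * (x ^ 2 - b).im / (lam / 32 + ‖x ^ 2 - b‖ ^ 2)

/-! The map `z ↦ z²` sends each of the half-planes `re > 0`, `re < 0` injectively onto `ℂ`
minus a null set, with Jacobian `4‖z‖²`; hence `∫ ‖x‖² f(x²) dx = ½ ∫ f`. After translating
away `b`, each integrand becomes `λ m · P(y) / (m + ‖y‖²)⁴` with `m = λ/32` and `P` one of the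
quadratic forms `re²`, `im²`, `re·im`. In polar coordinates this factors as
`∫₀^∞ r³/(m + r²)⁴ dr = 1/(12 m²)` times the angular integral of `cos²`, `sin²`, `cos·sin`
over a period, which is `π`, `π`, `0`. -/

open Topology

namespace Complex

lemma volume_setOf_re_eq_zero : volume {z : ℂ | z.re = 0} = 0 := by
  have hker : (LinearMap.ker reLm : Set ℂ) = {z | z.re = 0} := by ext; simp
  rw [← hker]
  refine Measure.addHaar_submodule _ _ fun h => ?_
  simpa using (h ▸ Submodule.mem_top : (1 : ℂ) ∈ LinearMap.ker reLm)

lemma volume_setOf_im_eq_zero : volume {z : ℂ | z.im = 0} = 0 := by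
  have hker : (LinearMap.ker imLm : Set ℂ) = {z | z.im = 0} := by ext; simp
  rw [← hker]
  refine Measure.addHaar_submodule _ _ fun h => ?_
  simpa using (h ▸ Submodule.mem_top : I ∈ LinearMap.ker imLm)

lemma det_restrictScalars_smulRight (c : ℂ) :
    (((1 : ℂ →L[ℂ] ℂ).smulRight c).restrictScalars ℝ).det = normSq c := by
  simp [ContinuousLinearMap.det, LinearMap.det_restrictScalars, Algebra.norm_complex_eq]

lemma hasFDerivAt_sq (x : ℂ) :
    HasFDerivAt (fun z : ℂ => z ^ 2) (((1 : ℂ →L[ℂ] ℂ).smulRight (2 * x)).restrictScalars ℝ) x :=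
  (hasDerivAt_iff_hasFDerivAt.1 (by simpa using hasDerivAt_pow 2 x)).restrictScalars ℝ

lemma injOn_sq {s : Set ℂ} (hs : ∀ z ∈ s, -z ∉ s) : InjOn (fun z : ℂ => z ^ 2) s := by
  intro a ha b hb hab
  rcases sq_eq_sq_iff_eq_or_eq_neg.1 hab with h | h
  · exact h
  · exact absurd (h ▸ ha) (hs b hb)

lemma exists_sq_eq_of_im_ne_zero {w : ℂ} (hw : w.im ≠ 0) : ∃ z : ℂ, 0 < z.re ∧ z ^ 2 = w := by
  obtain ⟨z, rfl⟩ := IsAlgClosed.exists_pow_nat_eq w two_pos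
  have hre : z.re ≠ 0 := fun h => hw (by simp [sq, h])
  rcases hre.lt_or_gt with h | h
  · exact ⟨-z, by simpa using h, neg_sq z⟩
  · exact ⟨z, h, rfl⟩

lemma polarCoord_symm_re (r θ : ℝ) : (Complex.polarCoord.symm (r, θ)).re = r * Real.cos θ := by
  simp [cos_ofReal_re, sin_ofReal_re]

lemma polarCoord_symm_im (r θ : ℝ) : (Complex.polarCoord.symm (r, θ)).im = r * Real.sin θ := by
  simp [cos_ofReal_re, sin_ofReal_re]

section SquareMap

variable {E : Type*} [NormedAddCommGroup E] [NormedSpace ℝ E]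

lemma image_sq_ae_eq_univ {s : Set ℂ}
    (hs : ∀ w : ℂ, w.im ≠ 0 → w ∈ (fun z : ℂ => z ^ 2) '' s) :
    (fun z : ℂ => z ^ 2) '' s =ᵐ[volume] (univ : Set ℂ) := by
  refine ae_eq_univ.2 (measure_mono_null (fun w hw => ?_) volume_setOf_im_eq_zero)
  by_contra h
  exact hw (hs w h)

lemma abs_det_fderiv_sq (x : ℂ) :
    |(((1 : ℂ →L[ℂ] ℂ).smulRight (2 * x)).restrictScalars ℝ).det| = 4 * ‖x‖ ^ 2 := by
  rw [det_restrictScalars_smulRight, abs_of_nonneg (normSq_nonneg _), normSq_eq_norm_sq, norm_mul]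
  norm_num
  ring

lemma setIntegral_norm_sq_smul_comp_sq {s : Set ℂ} (hs : MeasurableSet s)
    (hinj : ∀ z ∈ s, -z ∉ s) (himage : ∀ w : ℂ, w.im ≠ 0 → w ∈ (fun z : ℂ => z ^ 2) '' s)
    (f : ℂ → E) :
    ∫ x in s, ‖x‖ ^ 2 • f (x ^ 2) = (4 : ℝ)⁻¹ • ∫ y, f y := by
  rw [← setIntegral_univ (f := f), ← setIntegral_congr_set (image_sq_ae_eq_univ himage),
    integral_image_eq_integral_abs_det_fderiv_smul volume hs
      (fun x _ => (hasFDerivAt_sq x).hasFDerivWithinAt) (injOn_sq hinj),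
    ← integral_smul]
  refine setIntegral_congr_fun hs fun x _ => ?_
  rw [abs_det_fderiv_sq, smul_smul]
  congr 1
  ring

lemma integrableOn_norm_sq_smul_comp_sq {s : Set ℂ} (hs : MeasurableSet s)
    (hinj : ∀ z ∈ s, -z ∉ s) {f : ℂ → E} (hf : Integrable f) :
    IntegrableOn (fun x => ‖x‖ ^ 2 • f (x ^ 2)) s := by
  have h := (integrableOn_image_iff_integrableOn_abs_det_fderiv_smul volume hs
    (fun x _ => (hasFDerivAt_sq x).hasFDerivWithinAt) (injOn_sq hinj) f).1 hf.integrableOn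
  refine IntegrableOn.congr_fun (h.smul (4 : ℝ)⁻¹) (fun x _ => ?_) hs
  rw [Pi.smul_apply, abs_det_fderiv_sq, smul_smul]
  congr 1
  ring

lemma integral_norm_sq_smul_comp_sq {f : ℂ → E} (hf : Integrable f) :
    ∫ x, ‖x‖ ^ 2 • f (x ^ 2) = (2 : ℝ)⁻¹ • ∫ y, f y := by
  set H : Set ℂ := {z | 0 < z.re}
  have hH : MeasurableSet H := measurableSet_lt measurable_const measurable_re
  have hH_inj : ∀ z ∈ H, -z ∉ H := fun z hz h => by
    simp only [H, mem_ofPred_eq, neg_re] at hz h; linarith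
  have hH_image : ∀ w : ℂ, w.im ≠ 0 → w ∈ (fun z : ℂ => z ^ 2) '' H :=
    fun w hw => exists_sq_eq_of_im_ne_zero hw
  have hH'_inj : ∀ z ∈ -H, -z ∉ -H := fun z hz h => hH_inj z (by simpa using h) hz
  have hH'_image : ∀ w : ℂ, w.im ≠ 0 → w ∈ (fun z : ℂ => z ^ 2) '' (-H) := fun w hw => by
    obtain ⟨z, hz, rfl⟩ := hH_image w hw
    exact ⟨-z, by simpa using hz, neg_sq z⟩
  have hcover : (H ∪ -H : Set ℂ) =ᵐ[volume] (univ : Set ℂ) := by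
    refine ae_eq_univ.2 (measure_mono_null (fun z hz => ?_) volume_setOf_re_eq_zero)
    simp only [H, compl_union, mem_inter_iff, mem_compl_iff, Set.mem_neg, mem_ofPred_eq, neg_re,
      not_lt] at hz ⊢
    linarith
  rw [← setIntegral_univ (f := fun x => ‖x‖ ^ 2 • f (x ^ 2)), ← setIntegral_congr_set hcover,
    setIntegral_union (t := -H) (disjoint_left.2 hH_inj) hH.neg
      (integrableOn_norm_sq_smul_comp_sq hH hH_inj hf)
      (integrableOn_norm_sq_smul_comp_sq hH.neg hH'_inj hf),
    setIntegral_norm_sq_smul_comp_sq hH hH_inj hH_image,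
    setIntegral_norm_sq_smul_comp_sq hH.neg hH'_inj hH'_image, ← add_smul]
  norm_num

end SquareMap

end Complex

lemma integral_Ioi_pow_three_div_add_sq_pow_four {m : ℝ} (hm : 0 < m) :
    ∫ r in Ioi (0 : ℝ), r ^ 3 / (m + r ^ 2) ^ 4 = (12 * m ^ 2)⁻¹ := by
  have hpos : ∀ r : ℝ, 0 < m + r ^ 2 := fun r => by positivity
  have hderiv : ∀ r ∈ Ici (0 : ℝ), HasDerivAt
      (fun r : ℝ => m / (6 * (m + r ^ 2) ^ 3) - 1 / (4 * (m + r ^ 2) ^ 2))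
      (r ^ 3 / (m + r ^ 2) ^ 4) r := by
    intro r _
    have hD := (hpos r).ne'
    have h : HasDerivAt (fun r : ℝ => m + r ^ 2) (2 * r) r := by
      simpa using (hasDerivAt_pow 2 r).const_add m
    refine (((hasDerivAt_const r m).div ((h.pow 3).const_mul 6) (by simpa using hD)).sub
      ((hasDerivAt_const r 1).div ((h.pow 2).const_mul 4) (by simpa using hD))).congr_deriv ?_
    simp only [Pi.pow_apply]
    field_simp
    ring
  have hlim : Tendsto (fun r : ℝ => m / (6 * (m + r ^ 2) ^ 3) - 1 / (4 * (m + r ^ 2) ^ 2))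
      atTop (𝓝 0) := by
    have h : Tendsto (fun r : ℝ => m + r ^ 2) atTop atTop :=
      tendsto_atTop_add_const_left _ m (tendsto_pow_atTop two_ne_zero)
    simpa using ((tendsto_const_nhds (x := m)).div_atTop
      (((tendsto_pow_atTop three_ne_zero).comp h).const_mul_atTop (by norm_num : (0:ℝ) < 6))).sub
      ((tendsto_const_nhds (x := (1 : ℝ))).div_atTop
      (((tendsto_pow_atTop two_ne_zero).comp h).const_mul_atTop (by norm_num : (0:ℝ) < 4)))
  rw [integral_Ioi_of_hasDerivAt_of_nonneg' hderiv (fun r hr => by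
    have := le_of_lt (mem_Ioi.mp hr); positivity) hlim]
  field_simp
  ring

lemma integral_div_add_norm_sq_pow_four {m : ℝ} (hm : 0 < m) {P : ℂ → ℝ} {g : ℝ → ℝ}
    (hP : ∀ r θ : ℝ, P (Complex.polarCoord.symm (r, θ)) = r ^ 2 * g θ) :
    ∫ y : ℂ, P y / (m + ‖y‖ ^ 2) ^ 4 = (12 * m ^ 2)⁻¹ * ∫ θ in -π..π, g θ := by
  rw [← Complex.integral_comp_polarCoord_symm,
    show polarCoord.target = Ioi (0 : ℝ) ×ˢ Ioo (-π) π from rfl]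
  have hsplit : ∀ p ∈ Ioi (0 : ℝ) ×ˢ Ioo (-π) π,
      p.1 • (P (Complex.polarCoord.symm p) / (m + ‖Complex.polarCoord.symm p‖ ^ 2) ^ 4)
        = p.1 ^ 3 / (m + p.1 ^ 2) ^ 4 * g p.2 := by
    rintro ⟨r, θ⟩ -
    rw [Complex.norm_polarCoord_symm, sq_abs, hP, smul_eq_mul]
    ring
  rw [setIntegral_congr_fun (measurableSet_Ioi.prod measurableSet_Ioo) hsplit,
    Measure.volume_eq_prod, setIntegral_prod_mul (fun r : ℝ => r ^ 3 / (m + r ^ 2) ^ 4) g,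
    integral_Ioi_pow_three_div_add_sq_pow_four hm,
    intervalIntegral.integral_of_le (by linarith [pi_pos]), integral_Ioc_eq_integral_Ioo]

lemma integrable_div_add_norm_sq_pow_four {m : ℝ} (hm : 0 < m) {P : ℂ → ℝ} (hPc : Continuous P)
    (hP : ∀ y, |P y| ≤ ‖y‖ ^ 2) : Integrable (fun y : ℂ => P y / (m + ‖y‖ ^ 2) ^ 4) := by
  set c := min m 1
  have hc : 0 < c := lt_min hm one_pos
  have hdom : Integrable (fun y : ℂ => c⁻¹ ^ 3 * (1 + ‖y‖ ^ 2) ^ (-6 / 2 : ℝ)) :=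
    (integrable_rpow_neg_one_add_norm_sq (by norm_num [Complex.finrank_real_complex])).const_mul _
  refine hdom.mono (hPc.div (by fun_prop) fun y => by positivity).aestronglyMeasurable
    (ae_of_all _ fun y => ?_)
  have hD : c * (1 + ‖y‖ ^ 2) ≤ m + ‖y‖ ^ 2 := by
    nlinarith [min_le_left m 1, min_le_right m 1, sq_nonneg ‖y‖]
  have hrpow : (1 + ‖y‖ ^ 2) ^ (-6 / 2 : ℝ) = ((1 + ‖y‖ ^ 2) ^ 3)⁻¹ := by
    rw [show (-6 / 2 : ℝ) = -(3 : ℕ) by norm_num, rpow_neg (by positivity), rpow_natCast]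
  rw [hrpow, Real.norm_eq_abs, Real.norm_eq_abs, abs_div,
    abs_of_pos (by positivity : (0 : ℝ) < (m + ‖y‖ ^ 2) ^ 4),
    abs_of_pos (by positivity : (0 : ℝ) < c⁻¹ ^ 3 * ((1 + ‖y‖ ^ 2) ^ 3)⁻¹)]
  calc |P y| / (m + ‖y‖ ^ 2) ^ 4 ≤ (m + ‖y‖ ^ 2) / (m + ‖y‖ ^ 2) ^ 4 := by
        gcongr; exact (hP y).trans (by linarith)
    _ = ((m + ‖y‖ ^ 2) ^ 3)⁻¹ := by field_simp
    _ ≤ ((c * (1 + ‖y‖ ^ 2)) ^ 3)⁻¹ := by gcongr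
    _ = c⁻¹ ^ 3 * ((1 + ‖y‖ ^ 2) ^ 3)⁻¹ := by rw [mul_pow, mul_inv, inv_pow]

def kernelZ (lam : ℝ) (b : ℂ) (u : ℂ → ℝ) (x : ℂ) : ℝ :=
  Real.sqrt (lam / 32) * u (x ^ 2 - b) / (lam / 32 + ‖x ^ 2 - b‖ ^ 2)

lemma kernelZ_mul_kernelZ_mul_eW {lam : ℝ} (hlam : 0 ≤ lam) (b : ℂ) (u v : ℂ → ℝ) (x : ℂ)
    (t : ℝ) : kernelZ lam b u x * kernelZ lam b v x * t * eW lam b x = lam * (lam / 32) *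
      (t * (u (x ^ 2 - b) * v (x ^ 2 - b) / (lam / 32 + ‖x ^ 2 - b‖ ^ 2) ^ 4)) := by
  have h := Real.mul_self_sqrt (by positivity : 0 ≤ lam / 32)
  simp only [kernelZ, eW]
  generalize lam / 32 + ‖x ^ 2 - b‖ ^ 2 = D
  linear_combination (lam * t * u (x ^ 2 - b) * v (x ^ 2 - b) / D ^ 4) * h

lemma integral_kernelZ_mul_kernelZ_mul_norm_sq_mul_eW {lam : ℝ} (hlam : 0 < lam) (b : ℂ)
    {u v : ℂ → ℝ} {cu cv : ℝ → ℝ} (hu : Continuous u) (hv : Continuous v)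
    (hu_le : ∀ y, |u y| ≤ ‖y‖) (hv_le : ∀ y, |v y| ≤ ‖y‖)
    (hu_polar : ∀ r θ : ℝ, u (Complex.polarCoord.symm (r, θ)) = r * cu θ)
    (hv_polar : ∀ r θ : ℝ, v (Complex.polarCoord.symm (r, θ)) = r * cv θ) :
    ∫ x : ℂ, kernelZ lam b u x * kernelZ lam b v x * ‖x‖ ^ 2 * eW lam b x
      = 4 / 3 * ∫ θ in -π..π, cu θ * cv θ := by
  have hm : 0 < lam / 32 := by positivity
  set F : ℂ → ℝ := fun y => u y * v y / (lam / 32 + ‖y‖ ^ 2) ^ 4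
  have hF : Integrable F := integrable_div_add_norm_sq_pow_four hm (hu.mul hv) fun y => by
    rw [abs_mul, sq]; exact mul_le_mul (hu_le y) (hv_le y) (abs_nonneg _) (norm_nonneg _)
  simp_rw [kernelZ_mul_kernelZ_mul_eW hlam.le]
  calc ∫ x : ℂ, lam * (lam / 32) * (‖x‖ ^ 2 * F (x ^ 2 - b))
      = lam * (lam / 32) * (2⁻¹ * ∫ y : ℂ, F (y - b)) := by
        rw [integral_const_mul, ← smul_eq_mul (a := (2 : ℝ)⁻¹),
          ← Complex.integral_norm_sq_smul_comp_sq (hF.comp_sub_right b)]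
        rfl
    _ = lam * (lam / 32) * (2⁻¹ * ∫ y : ℂ, F y) := by rw [integral_sub_right_eq_self]
    _ = 4 / 3 * ∫ θ in -π..π, cu θ * cv θ := by
        rw [integral_div_add_norm_sq_pow_four hm (g := fun θ => cu θ * cv θ) fun r θ => by
          rw [hu_polar, hv_polar]; ring]
        field_simp
        ring

/-- orthogonality relations of the kernel elements `Z¹, Z²`
against the weight `|x|² e^{W_{λ,b}}`. -/
theorem stmt_18 (lam : ℝ) (hlam : 0 < lam) (b : ℂ) :
    (∫ x : ℂ, (Z1 lam b x) ^ 2 * ‖x‖ ^ 2 * eW lam b x) = 4 * π / 3 ∧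
    (∫ x : ℂ, (Z2 lam b x) ^ 2 * ‖x‖ ^ 2 * eW lam b x) = 4 * π / 3 ∧
    (∫ x : ℂ, Z1 lam b x * Z2 lam b x * ‖x‖ ^ 2 * eW lam b x) = 0 := by
  have hZ1 : Z1 lam b = kernelZ lam b Complex.re := rfl
  have hZ2 : Z2 lam b = kernelZ lam b Complex.im := rfl
  have hsq : ∀ u x, kernelZ lam b u x ^ 2 = kernelZ lam b u x * kernelZ lam b u x :=
    fun _ _ => sq _
  simp only [hZ1, hZ2, hsq]
  refine ⟨?_, ?_, ?_⟩
  · rw [integral_kernelZ_mul_kernelZ_mul_norm_sq_mul_eW hlam b Complex.continuous_re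
      Complex.continuous_re Complex.abs_re_le_norm Complex.abs_re_le_norm
      Complex.polarCoord_symm_re Complex.polarCoord_symm_re]
    simp_rw [← sq, integral_cos_sq, sin_neg, sin_pi]
    ring
  · rw [integral_kernelZ_mul_kernelZ_mul_norm_sq_mul_eW hlam b Complex.continuous_im
      Complex.continuous_im Complex.abs_im_le_norm Complex.abs_im_le_norm
      Complex.polarCoord_symm_im Complex.polarCoord_symm_im]
    simp_rw [← sq, integral_sin_sq, sin_neg, sin_pi]
    ring
  · rw [integral_kernelZ_mul_kernelZ_mul_norm_sq_mul_eW hlam b Complex.continuous_re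
      Complex.continuous_im Complex.abs_re_le_norm Complex.abs_im_le_norm Complex.polarCoord_symm_re
      Complex.polarCoord_symm_im]
    simp_rw [mul_comm (cos _), integral_sin_mul_cos₁, sin_neg, sin_pi]
    ring
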